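/- arXiv:2110.07163 — 4 statements merged into one kernel-verified Lean document; each statement's English description precedes it below -/
import Mathlib

section
/- Let Δt, Δx > 0 and let (M_i)_{i∈ℤ} be a family of nonnegative functions ℝ → ℝ such that M_i(ξ) = 0 whenever |ξ| > Δx/Δt. Define the upwind interface values M_{i+1/2}(ξ) = M_i(ξ) for ξ ≥ 0 and M_{i+1/2}(ξ) = M_{i+1}(ξ) for ξ < 0. Then for every i ∈ ℤ and every ξ ∈ ℝ, the kinetic update M_i'(ξ) = M_i(ξ) − (Δt/Δx)·ξ·(M_{i+1/2}(ξ) − M_{i−1/2}(ξ)) is nonnegative. -/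
open MeasureTheory Real

theorem kinetic_update_nonneg (Δt Δx : ℝ) (hΔt : 0 < Δt) (hΔx : 0 < Δx)
    (M : ℤ → ℝ → ℝ) (hMnonneg : ∀ i ξ, 0 ≤ M i ξ)
    (hMsupp : ∀ (i : ℤ) (ξ : ℝ), Δx / Δt < |ξ| → M i ξ = 0)
    (Mhalf : ℤ → ℝ → ℝ)
    (hMhalf : ∀ i ξ, Mhalf i ξ = if 0 ≤ ξ then M i ξ else M (i + 1) ξ) :
    ∀ (i : ℤ) (ξ : ℝ),
      0 ≤ M i ξ - (Δt / Δx) * ξ * (Mhalf i ξ - Mhalf (i - 1) ξ) := by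
  intro i ξ
  have hlam : 0 ≤ Δt / Δx := le_of_lt (div_pos hΔt hΔx)
  rw [hMhalf, hMhalf]
  by_cases hξ : 0 ≤ ξ
  · simp only [hξ, if_pos]
    by_cases hs : Δx / Δt < |ξ|
    · rw [hMsupp i ξ hs]
      have : (0:ℝ) ≤ Δt / Δx * ξ * M (i-1) ξ :=
        mul_nonneg (mul_nonneg hlam hξ) (hMnonneg _ _)
      linarith
    · push_neg at hs
      have hs' : ξ ≤ Δx / Δt := (abs_le.mp hs).2
      have h1 : Δt / Δx * ξ ≤ 1 := by
        rw [div_mul_eq_mul_div, div_le_one hΔx]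
        calc Δt * ξ ≤ Δt * (Δx / Δt) := by nlinarith
        _ = Δx := by field_simp
      have h2 : 0 ≤ Δt / Δx * ξ * M (i-1) ξ :=
        mul_nonneg (mul_nonneg hlam hξ) (hMnonneg _ _)
      nlinarith [hMnonneg i ξ]
  · simp only [hξ, if_neg, not_false_iff]
    push_neg at hξ
    have hξ' : ξ < 0 := hξ
    have hmn : 0 ≤ -(Δt / Δx * ξ) := by nlinarith
    have hsub : (i : ℤ) - 1 + 1 = i := by ring
    rw [hsub]
    by_cases hs : Δx / Δt < |ξ|
    · rw [hMsupp i ξ hs]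
      have : 0 ≤ -(Δt / Δx * ξ) * M (i+1) ξ := mul_nonneg hmn (hMnonneg _ _)
      linarith
    · push_neg at hs
      have hs' : -(Δx / Δt) ≤ ξ := (abs_le.mp hs).1
      have h1 : -1 ≤ Δt / Δx * ξ := by
        rw [div_mul_eq_mul_div, le_div_iff₀ hΔx]
        calc (-1) * Δx = Δt * (-(Δx / Δt)) := by field_simp
        _ ≤ Δt * ξ := by nlinarith
      have h2 : 0 ≤ -(Δt / Δx * ξ) * M (i+1) ξ := mul_nonneg hmn (hMnonneg _ _)
      nlinarith [hMnonneg i ξ]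
end

section
/- Let Δt, Δx > 0. For j ∈ {i−1, i, i+1} let A_j ≥ 0, v_j ∈ ℝ, γ_j > 0 satisfy the CFL condition Δt·(|v_j| + √3·γ_j) ≤ Δx, and let M_j(ξ) = (A_j/γ_j)·χ((ξ − v_j)/γ_j). Define M_{i+1/2}(ξ) = M_i(ξ)·1_{ξ≥0} + M_{i+1}(ξ)·1_{ξ<0} and M_{i−1/2}(ξ) = M_{i−1}(ξ)·1_{ξ≥0} + M_i(ξ)·1_{ξ<0}. Then the updated cell average A_i^{new} = A_i − (Δt/Δx)·∫_ℝ ξ·(M_{i+1/2}(ξ) − M_{i−1/2}(ξ)) dξ is nonnegative. -/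
open MeasureTheory Real

/-- The kinetic kernel χ(ω) = 1/(2√3) for |ω| ≤ √3 and 0 otherwise. -/
noncomputable def chi (ω : ℝ) : ℝ :=
  if |ω| ≤ Real.sqrt 3 then 1 / (2 * Real.sqrt 3) else 0

lemma chi_nonneg (ω : ℝ) : 0 ≤ chi ω := by
  unfold chi
  have h3 : (0:ℝ) < Real.sqrt 3 := Real.sqrt_pos.mpr (by norm_num)
  split <;> positivity

/-- The Maxwellian as an indicator function. -/
lemma M_indicator (A γ v : ℝ) (hγ : 0 < γ) (M : ℝ → ℝ)
    (hM : ∀ ξ, M ξ = (A / γ) * chi ((ξ - v) / γ)) (ξ : ℝ) :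
    M ξ = Set.indicator (Set.Icc (v - Real.sqrt 3 * γ) (v + Real.sqrt 3 * γ))
      (fun _ => A / (γ * (2 * Real.sqrt 3))) ξ := by
  rw [hM]
  unfold chi
  have hmem : |(ξ - v) / γ| ≤ Real.sqrt 3 ↔
      ξ ∈ Set.Icc (v - Real.sqrt 3 * γ) (v + Real.sqrt 3 * γ) := by
    rw [abs_div, abs_of_pos hγ, div_le_iff₀ hγ, abs_le, Set.mem_Icc]
    constructor <;> rintro ⟨h1, h2⟩ <;> constructor <;> linarith
  by_cases h : |(ξ - v) / γ| ≤ Real.sqrt 3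
  · rw [if_pos h, Set.indicator_of_mem (hmem.mp h)]
    rw [div_mul_div_comm, mul_one]
  · rw [if_neg h, Set.indicator_of_notMem (fun hm => h (hmem.mpr hm)), mul_zero]

/-- Under the CFL condition, the updated cell average of the cross section area
stays nonnegative.  Here `Am, vm, γm` are the data in cell `i-1`, `Ai, vi, γi`
in cell `i` and `Ap, vp, γp` in cell `i+1`. -/
theorem updated_area_nonneg (Δt Δx : ℝ) (hΔt : 0 < Δt) (hΔx : 0 < Δx)
    (Am Ai Ap vm vi vp γm γi γp : ℝ)
    (hAm : 0 ≤ Am) (hAi : 0 ≤ Ai) (hAp : 0 ≤ Ap)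
    (hγm : 0 < γm) (hγi : 0 < γi) (hγp : 0 < γp)
    (hCFLm : Δt * (|vm| + Real.sqrt 3 * γm) ≤ Δx)
    (hCFLi : Δt * (|vi| + Real.sqrt 3 * γi) ≤ Δx)
    (hCFLp : Δt * (|vp| + Real.sqrt 3 * γp) ≤ Δx)
    (Mm Mi Mp : ℝ → ℝ)
    (hMm : ∀ ξ, Mm ξ = (Am / γm) * chi ((ξ - vm) / γm))
    (hMi : ∀ ξ, Mi ξ = (Ai / γi) * chi ((ξ - vi) / γi))
    (hMp : ∀ ξ, Mp ξ = (Ap / γp) * chi ((ξ - vp) / γp))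
    (Mhalfp Mhalfm : ℝ → ℝ)
    (hMhalfp : ∀ ξ, Mhalfp ξ = if 0 ≤ ξ then Mi ξ else Mp ξ)
    (hMhalfm : ∀ ξ, Mhalfm ξ = if 0 ≤ ξ then Mm ξ else Mi ξ) :
    0 ≤ Ai - (Δt / Δx) * ∫ ξ : ℝ, ξ * (Mhalfp ξ - Mhalfm ξ) := by
  have h3 : (0:ℝ) < Real.sqrt 3 := Real.sqrt_pos.mpr (by norm_num)
  set K : ℝ := |vi| + Real.sqrt 3 * γi with hK
  have hKpos : 0 < K := by positivity
  -- nonnegativity of the Maxwellians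
  have hMm0 : ∀ ξ, 0 ≤ Mm ξ := fun ξ => by
    rw [hMm]; exact mul_nonneg (div_nonneg hAm hγm.le) (chi_nonneg _)
  have hMi0 : ∀ ξ, 0 ≤ Mi ξ := fun ξ => by
    rw [hMi]; exact mul_nonneg (div_nonneg hAi hγi.le) (chi_nonneg _)
  have hMp0 : ∀ ξ, 0 ≤ Mp ξ := fun ξ => by
    rw [hMp]; exact mul_nonneg (div_nonneg hAp hγp.le) (chi_nonneg _)
  -- indicator forms
  have hindm := M_indicator Am γm vm hγm Mm hMm
  have hindi := M_indicator Ai γi vi hγi Mi hMi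
  have hindp := M_indicator Ap γp vp hγp Mp hMp
  -- bound on the support of Mi
  have hsupp : ∀ ξ, Mi ξ ≠ 0 → |ξ| ≤ K := by
    intro ξ h0
    rw [hindi ξ] at h0
    by_cases hm : ξ ∈ Set.Icc (vi - Real.sqrt 3 * γi) (vi + Real.sqrt 3 * γi)
    · rcases Set.mem_Icc.mp hm with ⟨h1, h2⟩
      rw [abs_le]
      have := abs_nonneg vi
      constructor <;> [nlinarith [neg_abs_le vi]; nlinarith [le_abs_self vi]]
    · exact absurd (Set.indicator_of_notMem hm _) h0
  -- pointwise bound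
  have hptw : ∀ ξ, ξ * (Mhalfp ξ - Mhalfm ξ) ≤ K * Mi ξ := by
    intro ξ
    rw [hMhalfp, hMhalfm]
    by_cases hξ : 0 ≤ ξ
    · simp only [if_pos hξ]
      by_cases h0 : Mi ξ = 0
      · simp only [h0]
        nlinarith [hMm0 ξ]
      · have hb : ξ ≤ K := le_trans (le_abs_self ξ) (hsupp ξ h0)
        nlinarith [hMm0 ξ, hMi0 ξ]
    · simp only [if_neg hξ]
      push_neg at hξ
      by_cases h0 : Mi ξ = 0
      · simp only [h0]
        nlinarith [hMp0 ξ]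
      · have hb : -ξ ≤ K := le_trans (neg_le_abs ξ) (hsupp ξ h0)
        nlinarith [hMp0 ξ, hMi0 ξ]
  -- integrability of ξ * M for an indicator-type Maxwellian
  have hint : ∀ (c a b : ℝ) (M : ℝ → ℝ),
      (∀ ξ, M ξ = Set.indicator (Set.Icc a b) (fun _ => c) ξ) →
      Integrable (fun ξ => ξ * M ξ) := by
    intro c a b M hMind
    have heq : (fun ξ => ξ * M ξ) =
        Set.indicator (Set.Icc a b) (fun ξ => ξ * c) := by
      funext ξ
      rw [hMind ξ]
      by_cases hm : ξ ∈ Set.Icc a b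
      · rw [Set.indicator_of_mem hm, Set.indicator_of_mem hm]
      · rw [Set.indicator_of_notMem hm, Set.indicator_of_notMem hm, mul_zero]
    rw [heq, integrable_indicator_iff measurableSet_Icc]
    exact (continuous_id.mul continuous_const).integrableOn_Icc
  have hintMconst : ∀ (c a b : ℝ) (M : ℝ → ℝ),
      (∀ ξ, M ξ = Set.indicator (Set.Icc a b) (fun _ => c) ξ) →
      Integrable M := by
    intro c a b M hMind
    have heq : M = Set.indicator (Set.Icc a b) (fun _ => c) := funext hMind
    rw [heq, integrable_indicator_iff measurableSet_Icc]
    exact (integrableOn_const_iff (C := c)).mpr (Or.inr measure_Icc_lt_top)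
  have hintm := hint _ _ _ Mm hindm
  have hinti := hint _ _ _ Mi hindi
  have hintp := hint _ _ _ Mp hindp
  have hintMi := hintMconst _ _ _ Mi hindi
  -- integrability of the flux
  have hf_eq : (fun ξ => ξ * (Mhalfp ξ - Mhalfm ξ)) =
      Set.piecewise (Set.Ici 0) (fun ξ => ξ * Mi ξ - ξ * Mm ξ)
        (fun ξ => ξ * Mp ξ - ξ * Mi ξ) := by
    funext ξ
    rw [hMhalfp, hMhalfm]
    by_cases hξ : 0 ≤ ξ
    · rw [Set.piecewise_eq_of_mem _ _ _ (Set.mem_Ici.mpr hξ), if_pos hξ, if_pos hξ]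
      ring
    · rw [Set.piecewise_eq_of_notMem _ _ _ (fun hm => hξ (Set.mem_Ici.mp hm)),
        if_neg hξ, if_neg hξ]
      ring
  have hf_int : Integrable (fun ξ => ξ * (Mhalfp ξ - Mhalfm ξ)) := by
    rw [hf_eq]
    exact Integrable.piecewise measurableSet_Ici
      (hinti.sub hintm).integrableOn (hintp.sub hinti).integrableOn
  have hh_int : Integrable (fun ξ => K * Mi ξ) := hintMi.const_mul K
  -- value of ∫ Mi
  have hMi_int_val : ∫ ξ : ℝ, Mi ξ = Ai := by
    rw [show Mi = Set.indicator (Set.Icc (vi - Real.sqrt 3 * γi) (vi + Real.sqrt 3 * γi))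
        (fun _ => Ai / (γi * (2 * Real.sqrt 3))) from funext hindi]
    rw [MeasureTheory.integral_indicator_const _ measurableSet_Icc]
    rw [Real.volume_real_Icc, smul_eq_mul]
    rw [max_eq_left (by nlinarith)]
    have h3' : Real.sqrt 3 ≠ 0 := ne_of_gt h3
    field_simp
    ring
  -- the main estimate
  have hle : ∫ ξ : ℝ, ξ * (Mhalfp ξ - Mhalfm ξ) ≤ K * Ai := by
    calc ∫ ξ : ℝ, ξ * (Mhalfp ξ - Mhalfm ξ) ≤ ∫ ξ : ℝ, K * Mi ξ :=
          integral_mono hf_int hh_int hptw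
      _ = K * Ai := by rw [integral_const_mul, hMi_int_val]
  have hI0 : Δt * K ≤ Δx := hCFLi
  have hquot : (Δt / Δx) * (K * Ai) ≤ Ai := by
    rw [div_mul_eq_mul_div, div_le_iff₀ hΔx]
    nlinarith
  have hmul : (Δt / Δx) * ∫ ξ : ℝ, ξ * (Mhalfp ξ - Mhalfm ξ) ≤ (Δt / Δx) * (K * Ai) :=
    mul_le_mul_of_nonneg_left hle (by positivity)
  linarith
end

section
/- Let ρ > 0, A₀ > 0, P₀ ∈ ℝ, and let φ : (0,∞) → ℝ be continuously differentiable with φ'(a) > 0 for all a > 0; define the wave speed c(a) = √( (a/ρ)·φ'(a) ). Let A, v : ℝ × ℝ → ℝ be continuously differentiable with A(x,t) > 0 for all (x,t), satisfying ∂A/∂t + ∂(Av)/∂x = 0 and ∂(Av)/∂t + ∂(Av²)/∂x + (A/ρ)·∂p/∂x = 0 with p = P₀ + φ(A). Then the quantities W₁ = v + ∫_{A₀}^{A} c(a)/a da and W₂ = v − ∫_{A₀}^{A} c(a)/a da satisfy ∂W₁/∂t + (v + c(A))·∂W₁/∂x = 0 and ∂W₂/∂t + (v − c(A))·∂W₂/∂x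 = 0 everywhere. -/
open MeasureTheory Real intervalIntegral

/-- The Riemann invariants of the 1-D blood vessel system with a general
strictly increasing C¹ tube law `p = P₀ + φ(A)` are transported along the
characteristics `v ± c(A)`, with `c(a)² = (a/ρ)·φ'(a)`. -/
theorem general_riemann_invariants (ρ A₀ P₀ : ℝ) (hρ : 0 < ρ) (hA₀ : 0 < A₀)
    (φ : ℝ → ℝ) (hφ : ContDiffOn ℝ 1 φ (Set.Ioi 0))
    (hφ' : ∀ a : ℝ, 0 < a → 0 < deriv φ a)
    (c : ℝ → ℝ) (hc : ∀ a, c a = Real.sqrt ((a / ρ) * deriv φ a))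
    (A v : ℝ × ℝ → ℝ) (hA : ContDiff ℝ 1 A) (hv : ContDiff ℝ 1 v)
    (hApos : ∀ z, 0 < A z)
    (p : ℝ × ℝ → ℝ) (hp : ∀ z, p z = P₀ + φ (A z))
    (hmass : ∀ x t : ℝ,
      deriv (fun s => A (x, s)) t + deriv (fun y => A (y, t) * v (y, t)) x = 0)
    (hmom : ∀ x t : ℝ,
      deriv (fun s => A (x, s) * v (x, s)) t
        + deriv (fun y => A (y, t) * v (y, t) ^ 2) x
        + (A (x, t) / ρ) * deriv (fun y => p (y, t)) x = 0)
    (W₁ W₂ : ℝ × ℝ → ℝ)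
    (hW₁ : ∀ z, W₁ z = v z + ∫ a in A₀..(A z), c a / a)
    (hW₂ : ∀ z, W₂ z = v z - ∫ a in A₀..(A z), c a / a) :
    ∀ x t : ℝ,
      deriv (fun s => W₁ (x, s)) t
        + (v (x, t) + c (A (x, t))) * deriv (fun y => W₁ (y, t)) x = 0 ∧
      deriv (fun s => W₂ (x, s)) t
        + (v (x, t) - c (A (x, t))) * deriv (fun y => W₂ (y, t)) x = 0 := by
  -- continuity of deriv φ on (0,∞)
  have hderφ : ContinuousOn (deriv φ) (Set.Ioi 0) := by
    have h1 := hφ.continuousOn_derivWithin (uniqueDiffOn_Ioi 0) le_rfl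
    exact h1.congr fun a ha => (derivWithin_of_isOpen isOpen_Ioi ha).symm
  -- continuity of the integrand a ↦ c a / a on (0,∞)
  have hgcont : ContinuousOn (fun a => c a / a) (Set.Ioi 0) := by
    have h : ContinuousOn (fun a => Real.sqrt ((a / ρ) * deriv φ a) / a) (Set.Ioi 0) :=
      (((continuousOn_id.div_const ρ).mul hderφ).sqrt).div continuousOn_id
        fun a ha => ne_of_gt ha
    exact h.congr fun a _ => by rw [hc]
  -- FTC: derivative of the primitive
  have hFder : ∀ b : ℝ, 0 < b →
      HasDerivAt (fun u => ∫ a in A₀..u, c a / a) (c b / b) b := by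
    intro b hb
    have hsub : Set.uIcc A₀ b ⊆ Set.Ioi 0 := by
      intro u hu
      rw [Set.mem_uIcc] at hu
      rcases hu with ⟨h1, h2⟩ | ⟨h1, h2⟩ <;> simp only [Set.mem_Ioi] <;> linarith
    have hint : IntervalIntegrable (fun a => c a / a) volume A₀ b :=
      (hgcont.mono hsub).intervalIntegrable
    have hmeas : StronglyMeasurableAtFilter (fun a => c a / a) (nhds b) :=
      hgcont.stronglyMeasurableAtFilter isOpen_Ioi b hb
    exact intervalIntegral.integral_hasDerivAt_right hint hmeas
      (hgcont.continuousAt (Ioi_mem_nhds hb))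
  intro x t
  -- partial derivatives
  have hline_t : HasDerivAt (fun s : ℝ => ((x : ℝ), s)) ((0 : ℝ), (1 : ℝ)) t :=
    HasDerivAt.prodMk (hasDerivAt_const t x) (hasDerivAt_id t)
  have hline_x : HasDerivAt (fun y : ℝ => (y, (t : ℝ))) ((1 : ℝ), (0 : ℝ)) x :=
    HasDerivAt.prodMk (hasDerivAt_id x) (hasDerivAt_const x t)
  set At := fderiv ℝ A (x, t) (0, 1) with hAtdef
  set Ax := fderiv ℝ A (x, t) (1, 0) with hAxdef
  set vt := fderiv ℝ v (x, t) (0, 1) with hvtdef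
  set vx := fderiv ℝ v (x, t) (1, 0) with hvxdef
  have hAt : HasDerivAt (fun s => A (x, s)) At t :=
    ((hA.differentiable one_ne_zero (x, t)).hasFDerivAt).comp_hasDerivAt t hline_t
  have hAx : HasDerivAt (fun y => A (y, t)) Ax x :=
    ((hA.differentiable one_ne_zero (x, t)).hasFDerivAt).comp_hasDerivAt x hline_x
  have hvt : HasDerivAt (fun s => v (x, s)) vt t :=
    ((hv.differentiable one_ne_zero (x, t)).hasFDerivAt).comp_hasDerivAt t hline_t
  have hvx : HasDerivAt (fun y => v (y, t)) vx x :=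
    ((hv.differentiable one_ne_zero (x, t)).hasFDerivAt).comp_hasDerivAt x hline_x
  have haz : A (x, t) ≠ 0 := ne_of_gt (hApos (x, t))
  -- the mass equation in terms of partials
  have hmass' : At + (Ax * v (x, t) + A (x, t) * vx) = 0 := by
    have h1 : deriv (fun s => A (x, s)) t = At := hAt.deriv
    have h2 : deriv (fun y => A (y, t) * v (y, t)) x = Ax * v (x, t) + A (x, t) * vx :=
      (hAx.mul hvx).deriv
    have := hmass x t
    rw [h1, h2] at this
    exact this
  -- derivative of p in x
  have hφA : HasDerivAt φ (deriv φ (A (x, t))) (A (x, t)) :=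
    ((hφ.differentiableOn one_ne_zero).differentiableAt
      (Ioi_mem_nhds (hApos (x, t)))).hasDerivAt
  have hpx : deriv (fun y => p (y, t)) x = deriv φ (A (x, t)) * Ax := by
    have he : (fun y => p (y, t)) = fun y => P₀ + φ (A (y, t)) := funext fun y => hp _
    rw [he]
    exact ((hφA.comp x hAx).const_add P₀).deriv
  -- momentum equation in terms of partials
  have hmom' : (At * v (x, t) + A (x, t) * vt)
      + (Ax * v (x, t) ^ 2 + A (x, t) * ((2 : ℕ) * v (x, t) ^ 1 * vx))
      + (A (x, t) / ρ) * (deriv φ (A (x, t)) * Ax) = 0 := by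
    have h1 : deriv (fun s => A (x, s) * v (x, s)) t = At * v (x, t) + A (x, t) * vt :=
      (hAt.mul hvt).deriv
    have h2 : deriv (fun y => A (y, t) * v (y, t) ^ 2) x
        = Ax * v (x, t) ^ 2 + A (x, t) * ((2 : ℕ) * v (x, t) ^ 1 * vx) :=
      (hAx.mul (hvx.pow 2)).deriv
    have := hmom x t
    rw [h1, h2, hpx] at this
    exact this
  -- the wave speed relation
  have hc2 : c (A (x, t)) ^ 2 = (A (x, t) / ρ) * deriv φ (A (x, t)) := by
    rw [hc]
    exact Real.sq_sqrt (mul_nonneg (div_nonneg (hApos _).le hρ.le) (hφ' _ (hApos _)).le)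
  -- derivatives of W₁, W₂
  have hFA_t : HasDerivAt (fun s => ∫ a in A₀..(A (x, s)), c a / a)
      (c (A (x, t)) / A (x, t) * At) t :=
    by have := (hFder _ (hApos (x, t))).comp t hAt; exact this
  have hFA_x : HasDerivAt (fun y => ∫ a in A₀..(A (y, t)), c a / a)
      (c (A (x, t)) / A (x, t) * Ax) x :=
    by have := (hFder _ (hApos (x, t))).comp x hAx; exact this
  have hW₁t : deriv (fun s => W₁ (x, s)) t = vt + c (A (x, t)) / A (x, t) * At := by
    have he : (fun s => W₁ (x, s)) = fun s => v (x, s) + ∫ a in A₀..(A (x, s)), c a / a :=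
      funext fun s => hW₁ _
    rw [he]
    exact (hvt.add hFA_t).deriv
  have hW₁x : deriv (fun y => W₁ (y, t)) x = vx + c (A (x, t)) / A (x, t) * Ax := by
    have he : (fun y => W₁ (y, t)) = fun y => v (y, t) + ∫ a in A₀..(A (y, t)), c a / a :=
      funext fun y => hW₁ _
    rw [he]
    exact (hvx.add hFA_x).deriv
  have hW₂t : deriv (fun s => W₂ (x, s)) t = vt - c (A (x, t)) / A (x, t) * At := by
    have he : (fun s => W₂ (x, s)) = fun s => v (x, s) - ∫ a in A₀..(A (x, s)), c a / a :=
      funext fun s => hW₂ _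
    rw [he]
    exact (hvt.sub hFA_t).deriv
  have hW₂x : deriv (fun y => W₂ (y, t)) x = vx - c (A (x, t)) / A (x, t) * Ax := by
    have he : (fun y => W₂ (y, t)) = fun y => v (y, t) - ∫ a in A₀..(A (y, t)), c a / a :=
      funext fun y => hW₂ _
    rw [he]
    exact (hvx.sub hFA_x).deriv
  constructor
  · rw [hW₁t, hW₁x]
    field_simp
    linear_combination hmom' + (c (A (x, t)) - v (x, t)) * hmass' + Ax * hc2
  · rw [hW₂t, hW₂x]
    field_simp
    linear_combination hmom' + (-c (A (x, t)) - v (x, t)) * hmass' + Ax * hc2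
end

section
/- Let ρ, β > 0, A > 0, v ∈ ℝ, and 0 < ε·A₀ < A, and set γ² = (1/A)·∫_{εA₀}^{A} c²(a) da with c²(a) = (β/(2ρ))·√a, γ > 0. Then the second moment of the kinetic density M(ξ) = (A/γ)·χ((ξ − v)/γ) is ∫_ℝ ξ²·M(ξ) dξ = A·v² + (β/(3ρ))·( A^{3/2} − (εA₀)^{3/2} ). -/
open MeasureTheory Real

/-!
χ is the uniform density on `[-√3, √3]`, which has unit mass and unit variance, so `M` is the
uniform density of mass `A` on `[v - √3 γ, v + √3 γ]` and its second moment is `A (v² + γ²)`.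
The scale is chosen so that `A γ² = ∫ c²`, and `∫ √a da = (2/3) a^{3/2}`.
-/

open Set

theorem integral_sq_mul_indicator_Icc (c : ℝ) {a b : ℝ} (hab : a ≤ b) :
    ∫ x : ℝ, x ^ 2 * (Icc a b).indicator (fun _ => c) x = c * ((b ^ 3 - a ^ 3) / 3) := by
  have hind : (fun x : ℝ => x ^ 2 * (Icc a b).indicator (fun _ => c) x) =
      (Icc a b).indicator (fun x => x ^ 2 * c) :=
    funext fun x => (indicator_mul_right _ (fun x : ℝ => x ^ 2) _).symm
  rw [hind, integral_indicator measurableSet_Icc, integral_Icc_eq_integral_Ioc,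
    ← intervalIntegral.integral_of_le hab, intervalIntegral.integral_mul_const, integral_pow]
  ring

theorem chi_scaled_eq_indicator (A v : ℝ) {γ : ℝ} (hγ : 0 < γ) (ξ : ℝ) :
    A / γ * chi ((ξ - v) / γ) =
      (Icc (v - √3 * γ) (v + √3 * γ)).indicator (fun _ => A / (2 * √3 * γ)) ξ := by
  have hmem : |(ξ - v) / γ| ≤ √3 ↔ ξ ∈ Icc (v - √3 * γ) (v + √3 * γ) := by
    rw [abs_le, le_div_iff₀ hγ, div_le_iff₀ hγ, mem_Icc]
    constructor <;> rintro ⟨h₁, h₂⟩ <;> constructor <;> linarith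
  unfold chi
  split_ifs with h
  · rw [indicator_of_mem (hmem.1 h)]
    field_simp
  · rw [indicator_of_notMem (mt hmem.2 h), mul_zero]

theorem integral_sq_mul_kinetic_density (A v : ℝ) {γ : ℝ} (hγ : 0 < γ) :
    ∫ ξ : ℝ, ξ ^ 2 * (A / γ * chi ((ξ - v) / γ)) = A * (v ^ 2 + γ ^ 2) := by
  have h3 : 0 < √3 := by positivity
  simp_rw [chi_scaled_eq_indicator A v hγ]
  rw [integral_sq_mul_indicator_Icc _ (by nlinarith)]
  field_simp
  linear_combination (2 * A * √3 * γ ^ 3) * sq_sqrt (show (0 : ℝ) ≤ 3 by norm_num)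

theorem integral_sqrt (a b : ℝ) :
    ∫ x in a..b, √x = (2 / 3) * (b ^ ((3 : ℝ) / 2) - a ^ ((3 : ℝ) / 2)) := by
  simp_rw [sqrt_eq_rpow]
  rw [integral_rpow (Or.inl (by norm_num))]
  norm_num
  ring

theorem kinetic_second_moment_arterial_general (ρ β A v γ ε A₀ : ℝ)
    (hA : 0 < A) (hγ : 0 < γ)
    (hγsq : γ ^ 2 = (1 / A) * ∫ a in (ε * A₀)..A, (β / (2 * ρ)) * Real.sqrt a)
    (M : ℝ → ℝ) (hM : ∀ ξ, M ξ = (A / γ) * chi ((ξ - v) / γ)) :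
    (∫ ξ : ℝ, ξ ^ 2 * M ξ) =
      A * v ^ 2 + (β / (3 * ρ)) * (A ^ ((3 : ℝ) / 2) - (ε * A₀) ^ ((3 : ℝ) / 2)) := by
  simp_rw [hM]
  rw [integral_sq_mul_kinetic_density A v hγ, hγsq, intervalIntegral.integral_const_mul,
    integral_sqrt]
  field_simp

theorem kinetic_second_moment_arterial (ρ β A v γ ε A₀ : ℝ)
    (hρ : 0 < ρ) (hβ : 0 < β) (hA : 0 < A)
    (hεA₀ : 0 < ε * A₀) (hεA₀A : ε * A₀ < A) (hγ : 0 < γ)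
    (hγsq : γ ^ 2 = (1 / A) * ∫ a in (ε * A₀)..A, (β / (2 * ρ)) * Real.sqrt a)
    (M : ℝ → ℝ) (hM : ∀ ξ, M ξ = (A / γ) * chi ((ξ - v) / γ)) :
    (∫ ξ : ℝ, ξ ^ 2 * M ξ) =
      A * v ^ 2 + (β / (3 * ρ)) * (A ^ ((3 : ℝ) / 2) - (ε * A₀) ^ ((3 : ℝ) / 2)) :=
  kinetic_second_moment_arterial_general ρ β A v γ ε A₀ hA hγ hγsq M hM
end
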